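/- Every indecomposable interval in a Tamari lattice is either [Y,Y] or is of the form Y *_s J for a uniquely determined interval J and segment s of the left border of max(J). -/
import Mathlib


/-- Planar binary trees, counted by internal nodes. -/
inductive PBT where
  | leaf : PBT
  | node : PBT → PBT → PBT
deriving DecidableEq

namespace PBT

/-- Number of internal nodes. -/
def size : PBT → ℕ
  | leaf => 0
  | node l r => size l + size r + 1

/-- One rotation step, going up in the Tamari order: a right comb
configuration `a·(b·c)` is replaced by a left comb configuration `(a·b)·c`,
possibly deep inside the tree. -/
inductive Rot : PBT → PBT → Prop
  | rotate (a b c : PBT) : Rot (node a (node b c)) (node (node a b) c)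
  | left {l l' : PBT} (r : PBT) : Rot l l' → Rot (node l r) (node l' r)
  | right (l : PBT) {r r' : PBT} : Rot r r' → Rot (node l r) (node l r')

/-- The Tamari order: the reflexive-transitive closure of rotation. -/
def le (S T : PBT) : Prop := Relation.ReflTransGen Rot S T

/-- The unique tree with one internal node. -/
def Y : PBT := node leaf leaf

/-- `S / T`: graft the root of `S` onto the leftmost leaf of `T`. -/
def graftL : PBT → PBT → PBT
  | S, leaf => S
  | S, node l r => node (graftL S l) r

/-- `T₁ / T₂ / ⋯ / T_k` for a list of trees (the empty graft is the trivial tree). -/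
def listGraft (L : List PBT) : PBT := L.foldr graftL leaf

/-- A (nontrivial) tree is indecomposable if it is not of the form `S / T`
with `S`, `T` both nontrivial. -/
def Indec (T : PBT) : Prop :=
  T ≠ leaf ∧ ¬ ∃ S U : PBT, S ≠ leaf ∧ U ≠ leaf ∧ graftL S U = T

end PBT

/-- A pair `(S,T)` is a Tamari interval when `S ≤ T`. -/
def isItv (p : PBT × PBT) : Prop := PBT.le p.1 p.2

/-- Grafting of intervals, componentwise on minima and maxima:
`J/K = [min J / min K, max J / max K]`. -/
def igraft (p q : PBT × PBT) : PBT × PBT := (PBT.graftL p.1 q.1, PBT.graftL p.2 q.2)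

/-- `I₁ / I₂ / ⋯ / I_k` for a list of intervals. -/
def ilistGraft (L : List (PBT × PBT)) : PBT × PBT := L.foldr igraft (PBT.leaf, PBT.leaf)

/-- An interval is indecomposable if it is nontrivial and is not the graft `J/K`
of two nontrivial intervals. -/
def IndecItv (p : PBT × PBT) : Prop :=
  isItv p ∧ p.1 ≠ PBT.leaf ∧
    ¬ ∃ q r : PBT × PBT, isItv q ∧ isItv r ∧ q.1 ≠ PBT.leaf ∧ r.1 ≠ PBT.leaf ∧
      igraft q r = p

namespace PBT

/-- `Lb T`: the number of segments along the left border of `T`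
(the edges on the path from the root to the leftmost leaf); `Lb Y = 2`. -/
def Lb : PBT → ℕ
  | leaf => 1
  | node l _ => Lb l + 1

/-- `addLeft s T`: attach a new left edge at segment `s` (numbered from the root,
starting at `0`) of the left border of `T`. -/
def addLeft : ℕ → PBT → PBT
  | 0, T => node leaf T
  | _ + 1, leaf => leaf
  | s + 1, node l r => node (addLeft s l) r

end PBT


namespace PBT

lemma rot_size {S T : PBT} (h : Rot S T) : S.size = T.size := by
  induction h <;> simp [size] <;> omega

lemma le_size {S T : PBT} (h : le S T) : S.size = T.size := by
  induction h with
  | refl => rfl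
  | tail _ h ih => rw [ih, rot_size h]

lemma rot_src_node {S T : PBT} (h : Rot S T) : ∃ a b, S = node a b := by
  cases h <;> exact ⟨_, _, rfl⟩

lemma rot_tgt_node {S T : PBT} (h : Rot S T) : ∃ a b, T = node a b := by
  cases h <;> exact ⟨_, _, rfl⟩

lemma rot_graftL {A B U : PBT} (h : Rot (graftL A B) U) :
    ∃ A' B', U = graftL A' B' ∧ ((A = A' ∧ Rot B B') ∨ (Rot A A' ∧ B = B')) := by
  induction B generalizing U with
  | leaf => exact ⟨U, leaf, rfl, Or.inr ⟨h, rfl⟩⟩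
  | node l r ihl ihr =>
    rw [show graftL A (node l r) = node (graftL A l) r from rfl] at h
    cases h with
    | rotate a b c =>
      exact ⟨A, node (node l b) c, rfl, Or.inl ⟨rfl, Rot.rotate l b c⟩⟩
    | left r h' =>
      obtain ⟨A', l', hu, hcase⟩ := ihl h'
      refine ⟨A', node l' r, by simp [graftL, hu], ?_⟩
      rcases hcase with ⟨h1, h2⟩ | ⟨h1, h2⟩
      · exact Or.inl ⟨h1, Rot.left r h2⟩
      · exact Or.inr ⟨h1, by rw [h2]⟩
    | right l h' =>
      exact ⟨A, node l _, rfl, Or.inl ⟨rfl, Rot.right l h'⟩⟩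

lemma le_graftL_star {A B T : PBT} (h : le (graftL A B) T) :
    ∃ A' B', T = graftL A' B' ∧ le A A' ∧ le B B' := by
  induction h with
  | refl => exact ⟨A, B, rfl, Relation.ReflTransGen.refl, Relation.ReflTransGen.refl⟩
  | tail _ hstep ih =>
    obtain ⟨A', B', rfl, hA, hB⟩ := ih
    obtain ⟨A'', B'', rfl, hc⟩ := rot_graftL hstep
    rcases hc with ⟨h1, h2⟩ | ⟨h1, h2⟩
    · exact ⟨A'', B'', rfl, h1 ▸ hA, hB.tail h2⟩
    · exact ⟨A'', B'', rfl, hA.tail h1, h2 ▸ hB⟩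

/-- remove the bottom node of the left spine -/
def del : PBT → PBT
  | leaf => leaf
  | node leaf r => r
  | node (node a b) r => node (del (node a b)) r

lemma rot_del {U V : PBT} (h : Rot U V) : del U = del V ∨ Rot (del U) (del V) := by
  induction h with
  | rotate a b c =>
    cases a with
    | leaf => left; simp [del]
    | node x y => right; simp only [del]; exact Rot.rotate _ _ _
  | left r h ih =>
    obtain ⟨a, b, rfl⟩ := rot_src_node h
    obtain ⟨a', b', rfl⟩ := rot_tgt_node h
    simp only [del]
    rcases ih with h1 | h1
    · left; rw [h1]
    · right; exact Rot.left _ h1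
  | right l h ih =>
    cases l with
    | leaf => right; simpa [del] using h
    | node x y => right; simp only [del]; exact Rot.right _ h

lemma le_del {U V : PBT} (h : le U V) : le (del U) (del V) := by
  induction h with
  | refl => exact Relation.ReflTransGen.refl
  | tail _ hstep ih =>
    rcases rot_del hstep with h1 | h1
    · rwa [← h1]
    · exact ih.tail h1

lemma lb_pos (T : PBT) : 1 ≤ Lb T := by cases T <;> simp [Lb]

lemma lb_del : ∀ l r : PBT, Lb (node l r) - 1 ≤ Lb (del (node l r))
  | leaf, r => by
    have := lb_pos r
    simp only [del, Lb]; omega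
  | node a b, r => by
    have := lb_del a b
    simp only [del, Lb] at *; omega

lemma addLeft_del : ∀ T : PBT, T ≠ leaf → addLeft (Lb T - 2) (del T) = T
  | leaf, h => absurd rfl h
  | node leaf r, _ => by simp [Lb, del, addLeft]
  | node (node a b) r, _ => by
    have ih := addLeft_del (node a b) (by simp)
    have h2 : 1 ≤ Lb a := lb_pos a
    simp only [Lb, del]
    have heq : Lb a + 1 + 1 - 2 = (Lb a + 1 - 2) + 1 := by omega
    rw [heq]
    simp only [addLeft]
    rw [show Lb a + 1 - 2 = Lb (node a b) - 2 from by simp [Lb], ih]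

lemma lb_addLeft : ∀ (s : ℕ) (T : PBT), s < Lb T → Lb (addLeft s T) = s + 2
  | 0, T, _ => by simp [addLeft, Lb]
  | s+1, leaf, h => by simp [Lb] at h
  | s+1, node l r, h => by
    have hs : s < Lb l := by simp [Lb] at h; omega
    simp only [addLeft, Lb, lb_addLeft s l hs]

lemma addLeft_ne_leaf (s : ℕ) (T : PBT) (h : s < Lb T) : addLeft s T ≠ leaf := by
  intro h'
  have := lb_addLeft s T h
  rw [h'] at this
  simp [Lb] at this

lemma del_addLeft : ∀ (s : ℕ) (T : PBT), s < Lb T → del (addLeft s T) = T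
  | 0, T, _ => by simp [addLeft, del]
  | s+1, leaf, h => by simp [Lb] at h
  | s+1, node l r, h => by
    have hs : s < Lb l := by simp [Lb] at h; omega
    have h1 := del_addLeft s l hs
    have h2 := addLeft_ne_leaf s l hs
    obtain ⟨x, y, hxy⟩ : ∃ x y, addLeft s l = node x y := by
      cases h' : addLeft s l with
      | leaf => exact absurd h' h2
      | node x y => exact ⟨_, _, rfl⟩
    simp only [addLeft, hxy, del]
    rw [← hxy, h1]

lemma size_eq_zero {T : PBT} (h : T.size = 0) : T = leaf := by
  cases T with
  | leaf => rfl
  | node l r => simp [size] at h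

end PBT

/-- Every indecomposable Tamari interval is either `[Y,Y]` or of the form
`Y *ₛ J` for a uniquely determined interval `J` and segment `s` of the left
border of `max J`. -/
theorem indecomposable_interval_structure (p : PBT × PBT) (hp : IndecItv p) :
    p = (PBT.Y, PBT.Y) ∨
    ∃! q : (PBT × PBT) × ℕ, isItv q.1 ∧ q.1.1 ≠ PBT.leaf ∧ q.2 < PBT.Lb q.1.2 ∧
      p = (PBT.node PBT.leaf q.1.1, PBT.addLeft q.2 q.1.2) := by
  obtain ⟨S, T⟩ := p
  obtain ⟨hItv, hne, hnd⟩ := hp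
  have hItv' : PBT.le S T := hItv
  cases S with
  | leaf => exact absurd rfl hne
  | node l r =>
    have hl : l = PBT.leaf := by
      by_contra hl
      have hg : PBT.graftL l (PBT.node PBT.leaf r) = PBT.node l r := rfl
      obtain ⟨A', B', hT, hA, hB⟩ :=
        PBT.le_graftL_star (show PBT.le (PBT.graftL l (PBT.node PBT.leaf r)) T from hg ▸ hItv')
      exact hnd ⟨(l, A'), (PBT.node PBT.leaf r, B'), hA, hB, hl, by simp,
        by simp [igraft, hg, ← hT]⟩
    subst hl
    have hTne : T ≠ PBT.leaf := by
      intro h; subst h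
      have := PBT.le_size hItv'
      simp [PBT.size] at this
    by_cases hr : r = PBT.leaf
    · subst hr
      left
      have hs := PBT.le_size hItv'
      cases T with
      | leaf => exact absurd rfl hTne
      | node a b =>
        simp only [PBT.size] at hs
        have ha : a = PBT.leaf := PBT.size_eq_zero (by omega)
        have hb : b = PBT.leaf := PBT.size_eq_zero (by omega)
        subst ha; subst hb; rfl
    · right
      have hle : PBT.le r (PBT.del T) := by
        have := PBT.le_del hItv'
        simpa [PBT.del] using this
      have hlb : PBT.Lb T - 2 < PBT.Lb (PBT.del T) := by
        cases T with
        | leaf => exact absurd rfl hTne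
        | node a b =>
          have h1 := PBT.lb_del a b
          have h2 := PBT.lb_pos a
          simp only [PBT.Lb] at *
          omega
      refine ⟨((r, PBT.del T), PBT.Lb T - 2), ⟨hle, hr, hlb, ?_⟩, ?_⟩
      · rw [PBT.addLeft_del T hTne]
      · rintro ⟨⟨S', T'⟩, s⟩ ⟨h1, h2, h3, h4⟩
        simp only [Prod.mk.injEq, PBT.node.injEq] at h4
        obtain ⟨⟨-, hS'⟩, hT'⟩ := h4
        have hdel : T' = PBT.del T := by rw [hT', PBT.del_addLeft s T' h3]
        have hlbT : PBT.Lb T = s + 2 := by rw [hT', PBT.lb_addLeft s T' h3]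
        have hss : s = PBT.Lb T - 2 := by omega
        simp [hS', hdel, hss]
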